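/- Let k be a field and let I ⊆ k[x₀,x₁,x₂] be a strongly stable monomial ideal with dim_k k[x₀,x₁,x₂]/I = 11 that contains no monomial of degree 1. Then I is not generated by its monomials of degree at most 3; that is, the ideal generated by all monomials of I of degree at most 3 is strictly contained in I (equivalently, I has a minimal generator of degree at least 4). -/
import Mathlib


open MvPolynomial

/-- The total degree of an exponent vector. -/
def expDeg3 (d : Fin 3 →₀ ℕ) : ℕ := d.sum fun _ e => e

/-- `I ⊆ k[x₀,x₁,x₂]` is a monomial ideal: it is generated by (some set of) monomials. -/
def IsMonomialIdeal3 (k : Type*) [Field k] (I : Ideal (MvPolynomial (Fin 3) k)) : Prop :=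
  ∃ S : Set (Fin 3 →₀ ℕ), I = Ideal.span ((fun d => monomial d (1 : k)) '' S)

/-- `I` is strongly stable (Borel-fixed): for every monomial `m ∈ I` and indices `i < j`
with `x_j ∣ m`, we have `x_i · m / x_j ∈ I`. -/
def IsStronglyStable3 (k : Type*) [Field k] (I : Ideal (MvPolynomial (Fin 3) k)) : Prop :=
  ∀ d : Fin 3 →₀ ℕ, monomial d (1 : k) ∈ I →
    ∀ i j : Fin 3, i < j → d j ≠ 0 →
      monomial (d - Finsupp.single j 1 + Finsupp.single i 1) (1 : k) ∈ I

section Aux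

variable {k : Type*} [Field k]

lemma expDeg3_eq (d : Fin 3 →₀ ℕ) : expDeg3 d = d 0 + d 1 + d 2 := by
  rw [expDeg3, Finsupp.sum_fintype _ _ (fun _ => rfl), Fin.sum_univ_three]

lemma expDeg3_single (i : Fin 3) (n : ℕ) : expDeg3 (Finsupp.single i n) = n := by
  rw [expDeg3, Finsupp.sum_single_index rfl]

/-- The ideal of polynomials each of whose monomials is divisible by some element of `S`. -/
def divClosed (k : Type*) [Field k] (S : Set (Fin 3 →₀ ℕ)) : Ideal (MvPolynomial (Fin 3) k) where
  carrier := {p | ∀ d ∈ p.support, ∃ s ∈ S, s ≤ d}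
  zero_mem' := by simp
  add_mem' := by
    classical
    intro a b ha hb d hd
    rcases Finset.mem_union.1 (MvPolynomial.support_add hd) with h | h
    exacts [ha d h, hb d h]
  smul_mem' := by
    classical
    intro c p hp d hd
    rw [smul_eq_mul] at hd
    obtain ⟨a, _, b, hb, rfl⟩ := Finset.mem_add.1 (MvPolynomial.support_mul c p hd)
    obtain ⟨s, hs, hsb⟩ := hp b hb
    exact ⟨s, hs, hsb.trans le_add_self⟩

lemma monomial_mem_span_iff (S : Set (Fin 3 →₀ ℕ)) (d : Fin 3 →₀ ℕ) :
    monomial d (1 : k) ∈ Ideal.span ((fun d => monomial d (1 : k)) '' S) ↔ ∃ s ∈ S, s ≤ d := by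
  constructor
  · intro h
    classical
    have hle : Ideal.span ((fun d => monomial d (1 : k)) '' S) ≤ divClosed k S := by
      rw [Ideal.span_le]
      rintro _ ⟨s, hs, rfl⟩ e he
      rw [MvPolynomial.support_monomial, if_neg (one_ne_zero)] at he
      rw [Finset.mem_singleton] at he
      exact ⟨s, hs, he.ge⟩
    have hd : d ∈ (monomial d (1 : k)).support := by
      rw [MvPolynomial.support_monomial, if_neg (one_ne_zero)]
      exact Finset.mem_singleton_self d
    exact hle h d hd
  · rintro ⟨s, hs, hsd⟩
    have : monomial d (1 : k) = monomial (d - s) 1 * monomial s 1 := by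
      rw [monomial_mul, one_mul, tsub_add_cancel_of_le hsd]
    rw [this]
    exact Ideal.mul_mem_left _ _ (Ideal.subset_span ⟨s, hs, rfl⟩)

lemma mem_of_mem_support {I : Ideal (MvPolynomial (Fin 3) k)} (hmon : IsMonomialIdeal3 k I)
    {p : MvPolynomial (Fin 3) k} (hp : p ∈ I) {d : Fin 3 →₀ ℕ} (hd : d ∈ p.support) :
    monomial d (1 : k) ∈ I := by
  classical
  obtain ⟨S, rfl⟩ := hmon
  have hle : Ideal.span ((fun d => monomial d (1 : k)) '' S) ≤ divClosed k S := by
    rw [Ideal.span_le]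
    rintro _ ⟨s, hs, rfl⟩ e he
    rw [MvPolynomial.support_monomial, if_neg (one_ne_zero), Finset.mem_singleton] at he
    exact ⟨s, hs, he.ge⟩
  obtain ⟨s, hs, hsd⟩ := hle hp d hd
  exact (monomial_mem_span_iff S d).2 ⟨s, hs, hsd⟩

lemma mem_of_le {I : Ideal (MvPolynomial (Fin 3) k)} (hmon : IsMonomialIdeal3 k I)
    {d e : Fin 3 →₀ ℕ} (hd : monomial d (1 : k) ∈ I) (hde : d ≤ e) :
    monomial e (1 : k) ∈ I := by
  obtain ⟨S, rfl⟩ := hmon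
  obtain ⟨s, hs, hsd⟩ := (monomial_mem_span_iff S d).1 hd
  exact (monomial_mem_span_iff S e).2 ⟨s, hs, hsd.trans hde⟩

/-- Borel move: if `d` is standard then so is `x₂^(deg d)`. -/
lemma borelMove {I : Ideal (MvPolynomial (Fin 3) k)} (hss : IsStronglyStable3 k I) :
    ∀ n (d : Fin 3 →₀ ℕ), d 0 + d 1 = n → monomial d (1 : k) ∉ I →
      monomial (Finsupp.single 2 (expDeg3 d)) (1 : k) ∉ I := by
  intro n
  induction n with
  | zero =>
    intro d h0 hd
    have h00 : d 0 = 0 := by omega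
    have h01 : d 1 = 0 := by omega
    have hds : Finsupp.single (2 : Fin 3) (expDeg3 d) = d := by
      ext i
      fin_cases i <;> simp [Finsupp.single_apply, expDeg3_eq, h00, h01]
    rw [hds]; exact hd
  | succ m ih =>
    intro d hsum hd
    have hcase : d 0 ≠ 0 ∨ d 1 ≠ 0 := by omega
    rcases hcase with hi | hi
    · set d' : Fin 3 →₀ ℕ := d - Finsupp.single 0 1 + Finsupp.single 2 1 with hd'
      have h0' : d' 0 = d 0 - 1 := by
        rw [hd']; simp [Finsupp.tsub_apply, Finsupp.single_apply]
      have h1' : d' 1 = d 1 := by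
        rw [hd']; simp [Finsupp.tsub_apply, Finsupp.single_apply]
      have h2' : d' 2 = d 2 + 1 := by
        rw [hd']; simp [Finsupp.tsub_apply, Finsupp.single_apply]
      have hback : d' - Finsupp.single 2 1 + Finsupp.single 0 1 = d := by
        ext c
        rw [hd']
        simp only [Finsupp.add_apply, Finsupp.tsub_apply, Finsupp.single_apply]
        fin_cases c <;> simp <;> omega
      have hd'notmem : monomial d' (1 : k) ∉ I := by
        intro hmem
        have := hss d' hmem 0 2 (by decide) (by omega)
        rw [hback] at this
        exact hd this
      have hdeg : expDeg3 d' = expDeg3 d := by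
        rw [expDeg3_eq, expDeg3_eq, h0', h1', h2']; omega
      have hsum' : d' 0 + d' 1 = m := by omega
      have := ih d' hsum' hd'notmem
      rwa [hdeg] at this
    · set d' : Fin 3 →₀ ℕ := d - Finsupp.single 1 1 + Finsupp.single 2 1 with hd'
      have h0' : d' 0 = d 0 := by
        rw [hd']; simp [Finsupp.tsub_apply, Finsupp.single_apply]
      have h1' : d' 1 = d 1 - 1 := by
        rw [hd']; simp [Finsupp.tsub_apply, Finsupp.single_apply]
      have h2' : d' 2 = d 2 + 1 := by
        rw [hd']; simp [Finsupp.tsub_apply, Finsupp.single_apply]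
      have hback : d' - Finsupp.single 2 1 + Finsupp.single 1 1 = d := by
        ext c
        rw [hd']
        simp only [Finsupp.add_apply, Finsupp.tsub_apply, Finsupp.single_apply]
        fin_cases c <;> simp <;> omega
      have hd'notmem : monomial d' (1 : k) ∉ I := by
        intro hmem
        have := hss d' hmem 1 2 (by decide) (by omega)
        rw [hback] at this
        exact hd this
      have hdeg : expDeg3 d' = expDeg3 d := by
        rw [expDeg3_eq, expDeg3_eq, h0', h1', h2']; omega
      have hsum' : d' 0 + d' 1 = m := by omega
      have := ih d' hsum' hd'notmem
      rwa [hdeg] at this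

lemma standard_linearIndependent {I : Ideal (MvPolynomial (Fin 3) k)}
    (hmon : IsMonomialIdeal3 k I) :
    LinearIndependent k (fun d : {d : Fin 3 →₀ ℕ // monomial d (1 : k) ∉ I} =>
      Ideal.Quotient.mk I (monomial d.1 (1 : k))) := by
  classical
  rw [linearIndependent_iff']
  intro s g hsum i hi
  by_contra hgi
  set p : MvPolynomial (Fin 3) k := ∑ j ∈ s, g j • monomial j.1 (1 : k) with hp
  have hpI : p ∈ I := by
    have hmk : (Ideal.Quotient.mkₐ k I).toLinearMap p = 0 := by
      rw [hp, map_sum]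
      simp only [LinearMap.map_smul]
      simpa only [AlgHom.toLinearMap_apply, Ideal.Quotient.mkₐ_eq_mk] using hsum
    rwa [AlgHom.toLinearMap_apply, Ideal.Quotient.mkₐ_eq_mk,
      Ideal.Quotient.eq_zero_iff_mem] at hmk
  have hcoeff : MvPolynomial.coeff i.1 p = g i := by
    rw [hp, MvPolynomial.coeff_sum]
    rw [Finset.sum_eq_single i]
    · simp [MvPolynomial.coeff_monomial]
    · intro j hj hji
      have : j.1 ≠ i.1 := fun h => hji (Subtype.ext h)
      simp [MvPolynomial.coeff_smul, MvPolynomial.coeff_monomial, this]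
    · intro h; exact absurd hi h
  have hisup : i.1 ∈ p.support := by
    rw [MvPolynomial.mem_support_iff, hcoeff]; exact hgi
  exact i.2 (mem_of_mem_support hmon hpI hisup)

lemma standard_finite {I : Ideal (MvPolynomial (Fin 3) k)}
    (hmon : IsMonomialIdeal3 k I)
    (h11 : Module.finrank k (MvPolynomial (Fin 3) k ⧸ I) = 11) :
    {d : Fin 3 →₀ ℕ | monomial d (1 : k) ∉ I}.Finite := by
  by_contra hinf
  have hinf' : {d : Fin 3 →₀ ℕ | monomial d (1 : k) ∉ I}.Infinite := hinf
  haveI : Infinite {d : Fin 3 →₀ ℕ // monomial d (1 : k) ∉ I} := hinf'.to_subtype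
  have hli := standard_linearIndependent hmon
  haveI : Module.Free k (MvPolynomial (Fin 3) k ⧸ I) :=
    Module.Free.of_divisionRing k (MvPolynomial (Fin 3) k ⧸ I)
  have hfd : Module.Finite k (MvPolynomial (Fin 3) k ⧸ I) :=
    Module.finite_of_finrank_eq_succ (n := 10) h11
  have h1 := hli.aleph0_le_rank
  have h2 := Module.rank_lt_aleph0 k (MvPolynomial (Fin 3) k ⧸ I)
  exact absurd h1 (not_le.2 h2)

lemma exists_deg3_standard {I : Ideal (MvPolynomial (Fin 3) k)}
    (h11 : Module.finrank k (MvPolynomial (Fin 3) k ⧸ I) = 11) :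
    ∃ d : Fin 3 →₀ ℕ, 3 ≤ expDeg3 d ∧ monomial d (1 : k) ∉ I := by
  classical
  by_contra hcon
  push_neg at hcon
  set E : Finset (Fin 3 →₀ ℕ) :=
    {0, Finsupp.single 0 1, Finsupp.single 1 1, Finsupp.single 2 1,
      Finsupp.single 0 2, Finsupp.single 1 2, Finsupp.single 2 2,
      Finsupp.single 0 1 + Finsupp.single 1 1, Finsupp.single 0 1 + Finsupp.single 2 1,
      Finsupp.single 1 1 + Finsupp.single 2 1} with hE
  have hEcard : E.card ≤ 10 := by
    rw [hE]
    refine (Finset.card_insert_le _ _).trans (Nat.succ_le_succ ?_)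
    refine (Finset.card_insert_le _ _).trans (Nat.succ_le_succ ?_)
    refine (Finset.card_insert_le _ _).trans (Nat.succ_le_succ ?_)
    refine (Finset.card_insert_le _ _).trans (Nat.succ_le_succ ?_)
    refine (Finset.card_insert_le _ _).trans (Nat.succ_le_succ ?_)
    refine (Finset.card_insert_le _ _).trans (Nat.succ_le_succ ?_)
    refine (Finset.card_insert_le _ _).trans (Nat.succ_le_succ ?_)
    refine (Finset.card_insert_le _ _).trans (Nat.succ_le_succ ?_)
    refine (Finset.card_insert_le _ _).trans (Nat.succ_le_succ ?_)
    simp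
  set F : Finset (MvPolynomial (Fin 3) k ⧸ I) :=
    E.image (fun d => Ideal.Quotient.mk I (monomial d (1 : k))) with hF
  have hFcard : F.card ≤ 10 := le_trans (Finset.card_image_le) hEcard
  have hmemE : ∀ d : Fin 3 →₀ ℕ, expDeg3 d ≤ 2 → d ∈ E := by
    intro d hdle
    have hdec : d = Finsupp.single 0 (d 0) + Finsupp.single 1 (d 1) + Finsupp.single 2 (d 2) := by
      ext c; fin_cases c <;> simp [Finsupp.single_apply]
    rw [expDeg3_eq] at hdle
    obtain ⟨a, ha⟩ : ∃ n, d 0 = n := ⟨_, rfl⟩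
    obtain ⟨b, hb⟩ : ∃ n, d 1 = n := ⟨_, rfl⟩
    obtain ⟨c, hc⟩ : ∃ n, d 2 = n := ⟨_, rfl⟩
    rw [ha, hb, hc] at hdec hdle
    have haU : a ≤ 2 := by omega
    have hbU : b ≤ 2 := by omega
    have hcU : c ≤ 2 := by omega
    interval_cases a <;> interval_cases b <;> interval_cases c <;>
      first
        | omega
        | (simp only [Finsupp.single_zero, add_zero, zero_add] at hdec
           rw [hdec]; simp [hE])
  have hspan : Submodule.span k (F : Set (MvPolynomial (Fin 3) k ⧸ I)) = ⊤ := by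
    rw [eq_top_iff]
    have hsur : Function.Surjective (Ideal.Quotient.mkₐ k I).toLinearMap := by
      exact Ideal.Quotient.mk_surjective
    have htop : (⊤ : Submodule k (MvPolynomial (Fin 3) k ⧸ I)) =
        Submodule.map (Ideal.Quotient.mkₐ k I).toLinearMap
          (Submodule.span k (Set.range fun d : Fin 3 →₀ ℕ => (monomial d (1 : k)))) := by
      have hb : Submodule.span k (Set.range fun d : Fin 3 →₀ ℕ => (monomial d (1 : k))) =
          (⊤ : Submodule k (MvPolynomial (Fin 3) k)) := by
        have := (MvPolynomial.basisMonomials (Fin 3) k).span_eq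
        rwa [MvPolynomial.coe_basisMonomials] at this
      rw [hb, Submodule.map_top, LinearMap.range_eq_top.2 hsur]
    rw [htop, Submodule.map_span, ← Set.range_comp]
    rw [Submodule.span_le]
    rintro _ ⟨d, rfl⟩
    by_cases hd : expDeg3 d ≤ 2
    · apply Submodule.subset_span
      simp only [Function.comp_apply, hF, Finset.coe_image, Set.mem_image, Finset.mem_coe]
      exact ⟨d, hmemE d hd, rfl⟩
    · have : Ideal.Quotient.mk I (monomial d (1 : k)) = 0 := by
        rw [Ideal.Quotient.eq_zero_iff_mem]
        exact hcon d (by omega)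
      show (Ideal.Quotient.mkₐ k I).toLinearMap (monomial d (1 : k)) ∈ _
      simp only [AlgHom.toLinearMap_apply, Ideal.Quotient.mkₐ_eq_mk, this]
      exact Submodule.zero_mem _
  have hle : Module.finrank k (MvPolynomial (Fin 3) k ⧸ I) ≤ 10 := by
    have h1 := finrank_span_finset_le_card (R := k) F
    rw [Set.finrank, hspan, finrank_top] at h1
    exact h1.trans hFcard
  omega

end Aux

/-- A strongly stable monomial ideal in `k[x₀,x₁,x₂]` of colength 11 containing no monomial
of degree 1 is not generated by its monomials of degree at most 3: the ideal generated by
its monomials of degree at most 3 is strictly contained in `I`. -/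
theorem gin_has_generator_of_degree_at_least_four
    (k : Type*) [Field k] (I : Ideal (MvPolynomial (Fin 3) k))
    (hmon : IsMonomialIdeal3 k I) (hss : IsStronglyStable3 k I)
    (hcolen : Module.finrank k (MvPolynomial (Fin 3) k ⧸ I) = 11)
    (hdeg1 : ∀ d : Fin 3 →₀ ℕ, expDeg3 d = 1 → monomial d (1 : k) ∉ I) :
    Ideal.span ((fun d => monomial d (1 : k)) ''
      {d : Fin 3 →₀ ℕ | expDeg3 d ≤ 3 ∧ monomial d (1 : k) ∈ I}) < I := by
  classical
  have hfin := standard_finite hmon hcolen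
  obtain ⟨d3, hd3deg, hd3⟩ := exists_deg3_standard hcolen
  set Ft := hfin.toFinset with hFt
  have hd3mem : d3 ∈ Ft := by rw [hFt, Set.Finite.mem_toFinset]; exact hd3
  have hne : (Ft.image expDeg3).Nonempty := ⟨expDeg3 d3, Finset.mem_image_of_mem _ hd3mem⟩
  set D := (Ft.image expDeg3).max' hne with hD
  have hD3 : 3 ≤ D := le_trans hd3deg (Finset.le_max' _ _ (Finset.mem_image_of_mem _ hd3mem))
  obtain ⟨dm, hdmFt, hdmdeg⟩ := Finset.mem_image.1 ((Ft.image expDeg3).max'_mem hne)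
  have hdmI : monomial dm (1 : k) ∉ I := by
    rw [hFt, Set.Finite.mem_toFinset] at hdmFt; exact hdmFt
  have hmax : ∀ d : Fin 3 →₀ ℕ, monomial d (1 : k) ∉ I → expDeg3 d ≤ D := by
    intro d hd
    exact Finset.le_max' _ _ (Finset.mem_image_of_mem _ (by rw [hFt, Set.Finite.mem_toFinset]; exact hd))
  have hx2D : monomial (Finsupp.single 2 D) (1 : k) ∉ I := by
    have := borelMove hss (dm 0 + dm 1) dm rfl hdmI
    rwa [hdmdeg] at this
  have hxI : monomial (Finsupp.single 2 (D + 1)) (1 : k) ∈ I := by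
    by_contra h
    have := hmax _ h
    rw [expDeg3_single] at this
    omega
  have hxJ : monomial (Finsupp.single 2 (D + 1)) (1 : k) ∉
      Ideal.span ((fun d => monomial d (1 : k)) ''
        {d : Fin 3 →₀ ℕ | expDeg3 d ≤ 3 ∧ monomial d (1 : k) ∈ I}) := by
    rw [monomial_mem_span_iff]
    rintro ⟨s, ⟨hs3, hsI⟩, hsle⟩
    rw [Finsupp.le_def] at hsle
    have hs0 : s 0 = 0 := by
      have := hsle 0; simpa [Finsupp.single_apply] using this
    have hs1 : s 1 = 0 := by
      have := hsle 1; simpa [Finsupp.single_apply] using this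
    have hs2 : s 2 ≤ 3 := by
      rw [expDeg3_eq, hs0, hs1] at hs3; omega
    have hsleD : s ≤ Finsupp.single 2 D := by
      rw [Finsupp.le_def]
      intro i
      fin_cases i <;> simp [Finsupp.single_apply, hs0, hs1] <;> omega
    exact hx2D (mem_of_le hmon hsI hsleD)
  have hle : Ideal.span ((fun d => monomial d (1 : k)) ''
      {d : Fin 3 →₀ ℕ | expDeg3 d ≤ 3 ∧ monomial d (1 : k) ∈ I}) ≤ I := by
    rw [Ideal.span_le]
    rintro _ ⟨d, ⟨_, hdI⟩, rfl⟩
    exact hdI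
  exact hle.lt_of_ne fun h => hxJ (h.symm ▸ hxI)
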